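/- If Σ₂ is an all-positive signed graph, then the balancing dimension of the BCD-lexicographic product Σ₁*Σ₂ equals the balancing dimension of Σ₁. -/

import Mathlib

/-!
A switching function of `Σ₁ * Σ₂` restricts to one of `Σ₁` on any fibre `V₁ × {w}`.
Conversely, a switching function `ζ` of `Σ₁` may be taken nowhere zero (a vertex on no edge can
carry a unit vector instead of `0`), and then `(u, w) ↦ ζ u` switches `Σ₁ * Σ₂`: an edge over an
edge of `Σ₁` keeps its `Σ₁`-sign because `Σ₂` is all-positive, and an edge inside a fibre joins
two copies of `ζ u`, whose inner product `‖ζ u‖²` is positive.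
-/

open Finset
open scoped Classical

/-- A signed graph: a simple graph together with a ±1 sign on each edge. -/
structure SGraph (V : Type*) where
  G : SimpleGraph V
  sign : V → V → ℤ
  sign_symm : ∀ u v, sign u v = sign v u
  sign_mem : ∀ u v, G.Adj u v → sign u v = 1 ∨ sign u v = -1

variable {V V1 V2 W : Type*}

/-- `ζ` is a positive k-switching function for the signed graph `S`. -/
def IsPosSwitching [Fintype V] (S : SGraph V) (k : ℕ) (ζ : V → Fin k → ℤ) : Prop :=
  (∀ v i, ζ v i = -1 ∨ ζ v i = 0 ∨ ζ v i = 1) ∧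
  (∀ u v, S.G.Adj u v → (∑ i, ζ u i * ζ v i) ≠ 0) ∧
  (∀ u v, S.G.Adj u v → S.sign u v * Int.sign (∑ i, ζ u i * ζ v i) = 1)

def HasPosSwitching [Fintype V] (S : SGraph V) (k : ℕ) : Prop :=
  ∃ ζ : V → Fin k → ℤ, IsPosSwitching S k ζ

/-- The balancing dimension: least `k ≥ 1` admitting a positive k-switching function. -/
noncomputable def bdim [Fintype V] (S : SGraph V) : ℕ :=
  sInf {k | 1 ≤ k ∧ HasPosSwitching S k}

/-- A signed graph is balanced iff it can be switched to all-positive by a 1-switching. -/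
def SGraph.Balanced [Fintype V] (S : SGraph V) : Prop := HasPosSwitching S 1

/-- The negation of a signed graph. -/
def SGraph.neg (S : SGraph V) : SGraph V where
  G := S.G
  sign := fun u v => - S.sign u v
  sign_symm := fun u v => by (try dsimp only); rw [S.sign_symm]
  sign_mem := fun u v h => by rcases S.sign_mem u v h with h1 | h1 <;> simp [h1]

def SGraph.Antibalanced [Fintype V] (S : SGraph V) : Prop := S.neg.Balanced

/-- Switching equivalence of signed graphs. -/
def SwitchEquiv (S1 S2 : SGraph V) : Prop :=
  S1.G = S2.G ∧ ∃ η : V → ℤ, (∀ v, η v = 1 ∨ η v = -1) ∧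
    ∀ u v, S1.G.Adj u v → S2.sign u v = η u * S1.sign u v * η v

/-- The Cartesian product of signed graphs. -/
noncomputable def cartProd (S1 : SGraph V1) (S2 : SGraph V2) : SGraph (V1 × V2) where
  G := S1.G □ S2.G
  sign := fun p q => if p.2 = q.2 then S1.sign p.1 q.1 else S2.sign p.2 q.2
  sign_symm := by
    intro u v
    try dsimp only
    rcases eq_or_ne u.2 v.2 with h | h
    · rw [if_pos h, if_pos h.symm, S1.sign_symm]
    · rw [if_neg h, if_neg (Ne.symm h), S2.sign_symm]
  sign_mem := by
    intro u v h
    try dsimp only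
    rcases (SimpleGraph.boxProd_adj.mp h) with ⟨h1, h2⟩ | ⟨h1, h2⟩
    · rw [if_pos h2]; exact S1.sign_mem _ _ h1
    · rw [if_neg h1.ne]; exact S2.sign_mem _ _ h1
/-- The HG-lexicographic product of signed graphs. -/
noncomputable def lexHG (S1 : SGraph V1) (S2 : SGraph V2) : SGraph (V1 × V2) where
  G := { Adj := fun p q => S1.G.Adj p.1 q.1 ∨ (p.1 = q.1 ∧ S2.G.Adj p.2 q.2)
         symm := by
           refine ⟨?_⟩; rintro p q (h | ⟨h1, h2⟩)
           · exact Or.inl h.symm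
           · exact Or.inr ⟨h1.symm, h2.symm⟩
         loopless := by
           refine ⟨?_⟩; rintro p (h | ⟨_, h⟩)
           · exact S1.G.irrefl h
           · exact S2.G.irrefl h }
  sign := fun p q => if p.1 = q.1 then S2.sign p.2 q.2 else S1.sign p.1 q.1
  sign_symm := by
    intro u v
    try dsimp only
    rcases eq_or_ne u.1 v.1 with h | h
    · rw [if_pos h, if_pos h.symm, S2.sign_symm]
    · rw [if_neg h, if_neg (Ne.symm h), S1.sign_symm]
  sign_mem := by
    rintro p q (h | ⟨h1, h2⟩)
    · (try dsimp only); rw [if_neg h.ne]; exact S1.sign_mem _ _ h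
    · (try dsimp only); rw [if_pos h1]; exact S2.sign_mem _ _ h2

/-- The BCD-lexicographic product of signed graphs. -/
noncomputable def lexBCD (S1 : SGraph V1) (S2 : SGraph V2) : SGraph (V1 × V2) where
  G := { Adj := fun p q => S1.G.Adj p.1 q.1 ∨ (p.1 = q.1 ∧ S2.G.Adj p.2 q.2)
         symm := by
           refine ⟨?_⟩; rintro p q (h | ⟨h1, h2⟩)
           · exact Or.inl h.symm
           · exact Or.inr ⟨h1.symm, h2.symm⟩
         loopless := by
           refine ⟨?_⟩; rintro p (h | ⟨_, h⟩)
           · exact S1.G.irrefl h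
           · exact S2.G.irrefl h }
  sign := fun p q =>
    if S2.G.Adj p.2 q.2 then
      (if S1.G.Adj p.1 q.1 then S1.sign p.1 q.1 * S2.sign p.2 q.2 else S2.sign p.2 q.2)
    else S1.sign p.1 q.1
  sign_symm := by
    intro u v
    try dsimp only
    rw [S1.G.adj_comm v.1 u.1, S2.G.adj_comm v.2 u.2, S1.sign_symm v.1 u.1,
      S2.sign_symm v.2 u.2]
  sign_mem := by
    rintro p q (h | ⟨h1, h2⟩) <;> try dsimp only
    · by_cases h2 : S2.G.Adj p.2 q.2
      · rw [if_pos h2, if_pos h]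
        rcases S1.sign_mem _ _ h with e1 | e1 <;> rcases S2.sign_mem _ _ h2 with e2 | e2 <;>
          simp [e1, e2]
      · rw [if_neg h2]; exact S1.sign_mem _ _ h
    · rw [if_pos h2, if_neg (h1 ▸ S1.G.irrefl)]
      exact S2.sign_mem _ _ h2

/-- The tensor product of signed graphs. -/
def tensorProd (S1 : SGraph V1) (S2 : SGraph V2) : SGraph (V1 × V2) where
  G := { Adj := fun p q => S1.G.Adj p.1 q.1 ∧ S2.G.Adj p.2 q.2
         symm := ⟨fun p q ⟨h1, h2⟩ => ⟨h1.symm, h2.symm⟩⟩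
         loopless := ⟨fun p ⟨h1, _⟩ => S1.G.irrefl h1⟩ }
  sign := fun p q => S1.sign p.1 q.1 * S2.sign p.2 q.2
  sign_symm := by
    intro u v
    try dsimp only
    rw [S1.sign_symm, S2.sign_symm]
  sign_mem := by
    rintro p q ⟨h1, h2⟩
    try dsimp only
    rcases S1.sign_mem _ _ h1 with e1 | e1 <;> rcases S2.sign_mem _ _ h2 with e2 | e2 <;>
      simp [e1, e2]

/-- The strong product of signed graphs. -/
noncomputable def strongProd (S1 : SGraph V1) (S2 : SGraph V2) : SGraph (V1 × V2) where
  G := { Adj := fun p q => (S1.G.Adj p.1 q.1 ∧ p.2 = q.2) ∨ (p.1 = q.1 ∧ S2.G.Adj p.2 q.2) ∨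
           (S1.G.Adj p.1 q.1 ∧ S2.G.Adj p.2 q.2)
         symm := by
           refine ⟨?_⟩; rintro p q (⟨h1, h2⟩ | ⟨h1, h2⟩ | ⟨h1, h2⟩)
           · exact Or.inl ⟨h1.symm, h2.symm⟩
           · exact Or.inr (Or.inl ⟨h1.symm, h2.symm⟩)
           · exact Or.inr (Or.inr ⟨h1.symm, h2.symm⟩)
         loopless := by
           refine ⟨?_⟩; rintro p (⟨h1, _⟩ | ⟨_, h2⟩ | ⟨h1, _⟩)
           · exact S1.G.irrefl h1
           · exact S2.G.irrefl h2
           · exact S1.G.irrefl h1 }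
  sign := fun p q =>
    if p.1 = q.1 then S2.sign p.2 q.2
    else if p.2 = q.2 then S1.sign p.1 q.1
    else S1.sign p.1 q.1 * S2.sign p.2 q.2
  sign_symm := by
    intro u v
    try dsimp only
    rcases eq_or_ne u.1 v.1 with h | h
    · rw [if_pos h, if_pos h.symm, S2.sign_symm]
    · rw [if_neg h, if_neg (Ne.symm h)]
      rcases eq_or_ne u.2 v.2 with h' | h'
      · rw [if_pos h', if_pos h'.symm, S1.sign_symm]
      · rw [if_neg h', if_neg (Ne.symm h'), S1.sign_symm, S2.sign_symm]
  sign_mem := by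
    rintro p q (⟨h1, h2⟩ | ⟨h1, h2⟩ | ⟨h1, h2⟩) <;> try dsimp only
    · rw [if_neg h1.ne, if_pos h2]; exact S1.sign_mem _ _ h1
    · rw [if_pos h1]; exact S2.sign_mem _ _ h2
    · rw [if_neg h1.ne, if_neg h2.ne]
      rcases S1.sign_mem _ _ h1 with e1 | e1 <;> rcases S2.sign_mem _ _ h2 with e2 | e2 <;>
        simp [e1, e2]
/-- The cycle on `ZMod n` (vertices `0,1,…,n-1`) with the single negative edge `{0,1}`. -/
noncomputable def Cneg (n : ℕ) : SGraph (ZMod n) where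
  G := { Adj := fun i j => i ≠ j ∧ (i - j = 1 ∨ j - i = 1)
         symm := ⟨fun i j ⟨h1, h2⟩ => ⟨h1.symm, h2.symm⟩⟩
         loopless := ⟨fun i ⟨h1, _⟩ => h1 rfl⟩ }
  sign := fun i j => if (i = 0 ∧ j = 1) ∨ (i = 1 ∧ j = 0) then -1 else 1
  sign_symm := by
    intro u v
    try dsimp only
    exact if_congr (by tauto) rfl rfl
  sign_mem := by
    intro u v _
    try dsimp only
    by_cases h : (u = 0 ∧ v = 1) ∨ (u = 1 ∧ v = 0)
    · rw [if_pos h]; exact Or.inr rfl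
    · rw [if_neg h]; exact Or.inl rfl

/-- The all-negative complete signed graph on `n` vertices. -/
def Kneg (n : ℕ) : SGraph (Fin n) where
  G := ⊤
  sign := fun _ _ => -1
  sign_symm := fun _ _ => rfl
  sign_mem := fun _ _ _ => Or.inr rfl

/-- The edgeless signed graph on `k` vertices. -/
def Nk (k : ℕ) : SGraph (Fin k) where
  G := ⊥
  sign := fun _ _ => 1
  sign_symm := fun _ _ => rfl
  sign_mem := fun _ _ h => (h.elim)

/-- The lexicographic product of simple graphs. -/
def lexProdGraph (G : SimpleGraph V1) (H : SimpleGraph V2) : SimpleGraph (V1 × V2) where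
  Adj p q := G.Adj p.1 q.1 ∨ (p.1 = q.1 ∧ H.Adj p.2 q.2)
  symm := by
    refine ⟨?_⟩; rintro p q (h | ⟨h1, h2⟩)
    · exact Or.inl h.symm
    · exact Or.inr ⟨h1.symm, h2.symm⟩
  loopless := by
    refine ⟨?_⟩; rintro p (h | ⟨_, h⟩)
    · exact G.irrefl h
    · exact H.irrefl h

open Matrix

section PosSwitching

variable [Fintype V] [Fintype W]

theorem IsPosSwitching.comp {S : SGraph V} {T : SGraph W} {k : ℕ} {ζ : W → Fin k → ℤ}
    (hζ : IsPosSwitching T k ζ) (f : V → W) (hadj : ∀ u v, S.G.Adj u v → T.G.Adj (f u) (f v))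
    (hsign : ∀ u v, S.G.Adj u v → T.sign (f u) (f v) = S.sign u v) :
    IsPosSwitching S k (ζ ∘ f) :=
  ⟨fun v => hζ.1 (f v), fun u v h => hζ.2.1 _ _ (hadj u v h),
    fun u v h => hsign u v h ▸ hζ.2.2 _ _ (hadj u v h)⟩

theorem IsPosSwitching.ne_zero_of_adj {S : SGraph V} {k : ℕ} {ζ : V → Fin k → ℤ}
    (hζ : IsPosSwitching S k ζ) {u v : V} (h : S.G.Adj u v) : ζ u ≠ 0 ∧ ζ v ≠ 0 := by
  have hdot : ζ u ⬝ᵥ ζ v ≠ 0 := hζ.2.1 u v h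
  exact ⟨fun hu => hdot (by rw [hu, zero_dotProduct]),
    fun hv => hdot (by rw [hv, dotProduct_zero])⟩

theorem IsPosSwitching.exists_forall_ne_zero {S : SGraph V} {k : ℕ} {ζ : V → Fin k → ℤ}
    (hζ : IsPosSwitching S k ζ) (hk : 0 < k) :
    ∃ ζ' : V → Fin k → ℤ, IsPosSwitching S k ζ' ∧ ∀ v, ζ' v ≠ 0 := by
  let e : Fin k → ℤ := Pi.single ⟨0, hk⟩ 1
  have he : e ≠ 0 := by simp [e]
  let ζ' : V → Fin k → ℤ := fun v => if ζ v = 0 then e else ζ v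
  have hedge : ∀ u v, S.G.Adj u v → ζ' u = ζ u ∧ ζ' v = ζ v := fun u v h => by
    obtain ⟨hu, hv⟩ := hζ.ne_zero_of_adj h
    simp only [ζ', if_neg hu, if_neg hv, and_self]
  refine ⟨ζ', ⟨fun v i => ?_, fun u v h => ?_, fun u v h => ?_⟩, fun v => ?_⟩
  · by_cases hv : ζ v = 0
    · by_cases hi : i = ⟨0, hk⟩ <;> simp [ζ', e, hv, hi]
    · simpa only [ζ', if_neg hv] using hζ.1 v i
  · rw [(hedge u v h).1, (hedge u v h).2]; exact hζ.2.1 u v h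
  · rw [(hedge u v h).1, (hedge u v h).2]; exact hζ.2.2 u v h
  · by_cases hv : ζ v = 0
    · simpa only [ζ', if_pos hv] using he
    · simpa only [ζ', if_neg hv] using hv

end PosSwitching

theorem dotProduct_self_pos_of_ne_zero {ι : Type*} [Fintype ι] {x : ι → ℤ} (hx : x ≠ 0) :
    0 < x ⬝ᵥ x :=
  lt_of_le_of_ne (Finset.sum_nonneg fun i _ => mul_self_nonneg (x i))
    (Ne.symm (dotProduct_self_eq_zero.not.mpr hx))

section LexBCD

variable {S1 : SGraph V1} {S2 : SGraph V2}

theorem lexBCD_sign_of_adj_fst (h2 : ∀ u v, S2.G.Adj u v → S2.sign u v = 1) {p q : V1 × V2}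
    (h : S1.G.Adj p.1 q.1) : (lexBCD S1 S2).sign p q = S1.sign p.1 q.1 := by
  by_cases hA : S2.G.Adj p.2 q.2
  · simp [lexBCD, hA, h, h2 _ _ hA]
  · simp [lexBCD, hA]

theorem lexBCD_sign_of_fst_eq {p q : V1 × V2} (h1 : p.1 = q.1) (h : S2.G.Adj p.2 q.2) :
    (lexBCD S1 S2).sign p q = S2.sign p.2 q.2 := by
  simp [lexBCD, h, h1]

variable [Fintype V1] [Fintype V2] {k : ℕ}

theorem IsPosSwitching.of_lexBCD {ζ : V1 × V2 → Fin k → ℤ}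
    (hζ : IsPosSwitching (lexBCD S1 S2) k ζ) (w : V2) :
    IsPosSwitching S1 k (fun v => ζ (v, w)) :=
  hζ.comp (·, w) (fun _ _ h => Or.inl h) fun _ _ h => by simp [lexBCD]

theorem IsPosSwitching.lexBCD_fst (h2 : ∀ u v, S2.G.Adj u v → S2.sign u v = 1)
    {ζ : V1 → Fin k → ℤ} (hζ : IsPosSwitching S1 k ζ) (hne : ∀ v, ζ v ≠ 0) :
    IsPosSwitching (lexBCD S1 S2) k (fun p => ζ p.1) := by
  refine ⟨fun p => hζ.1 p.1, ?_, ?_⟩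
  · rintro p q (h | ⟨h1, -⟩)
    · exact hζ.2.1 _ _ h
    · show ζ p.1 ⬝ᵥ ζ q.1 ≠ 0
      rw [h1]
      exact (dotProduct_self_pos_of_ne_zero (hne q.1)).ne'
  · rintro p q (h | ⟨h1, h⟩)
    · rw [lexBCD_sign_of_adj_fst h2 h]; exact hζ.2.2 _ _ h
    · rw [lexBCD_sign_of_fst_eq h1 h, h2 _ _ h, one_mul]
      show Int.sign (ζ p.1 ⬝ᵥ ζ q.1) = 1
      rw [h1]
      exact Int.sign_eq_one_of_pos (dotProduct_self_pos_of_ne_zero (hne q.1))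

theorem hasPosSwitching_lexBCD_iff [Nonempty V2] (h2 : ∀ u v, S2.G.Adj u v → S2.sign u v = 1)
    (hk : 0 < k) : HasPosSwitching (lexBCD S1 S2) k ↔ HasPosSwitching S1 k := by
  constructor
  · rintro ⟨ζ, hζ⟩
    exact ⟨_, hζ.of_lexBCD (Classical.arbitrary V2)⟩
  · rintro ⟨ζ, hζ⟩
    obtain ⟨ζ', hζ', hne⟩ := hζ.exists_forall_ne_zero hk
    exact ⟨_, hζ'.lexBCD_fst h2 hne⟩

end LexBCD

theorem stmt15 [Fintype V1] [Fintype V2] [Nonempty V2] (S1 : SGraph V1) (S2 : SGraph V2)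
    (h2 : ∀ u v, S2.G.Adj u v → S2.sign u v = 1) :
    bdim (lexBCD S1 S2) = bdim S1 := by
  unfold bdim
  congr 1
  ext k
  exact and_congr_right fun hk => hasPosSwitching_lexBCD_iff h2 hk
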